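/- arXiv:2311.03582 — 2 statements merged into one kernel-verified Lean document; each statement's English description precedes it below -/
import Mathlib

section
/- Let ρ0 be a Borel probability measure on ℝ with finite second moment and v0 ∈ L²(ρ0). Let X : [0,∞) × ℝ → ℝ be such that for each t ≥ 0 the map y ↦ X(t,y) is Borel and nondecreasing on spt(ρ0), there is R > 0 with |X(t,y)| ≤ R for all y ∈ spt(ρ0) and all t ≥ 0, and for all 0 ≤ s ≤ t, ∫_ℝ X(t,y)X(s,y)ρ0(dy) = ∫_ℝ X(t,y)[y + s·v0(y)]ρ0(dy). Then there exists X_∞ ∈ L²(ρ0) such that ‖X(t,·) − X_∞‖_{L²(ρ0)} → 0 as t → ∞. -/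
open MeasureTheory Filter Set Topology Metric
open scoped ENNReal NNReal RealInnerProductSpace

lemma aux_support_compl_null (μ : Measure ℝ) :
    μ {y : ℝ | ∀ ε > (0:ℝ), 0 < μ (Metric.ball y ε)}ᶜ = 0 := by
  have hsub : {y : ℝ | ∀ ε > (0:ℝ), 0 < μ (Metric.ball y ε)}ᶜ ⊆
      ⋃ p : ℚ × ℚ, ⋃ (_ : μ (Metric.ball (p.1 : ℝ) (p.2 : ℝ)) = 0),
        Metric.ball (p.1 : ℝ) (p.2 : ℝ) := by
    intro y hy
    simp only [mem_compl_iff, mem_setOf_eq, not_forall, not_lt, nonpos_iff_eq_zero,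
      exists_prop] at hy
    obtain ⟨ε, hε, hμ⟩ := hy
    obtain ⟨q, hq1, hq2⟩ := exists_rat_btwn (by linarith : y - ε/4 < y)
    obtain ⟨r, hr1, hr2⟩ := exists_rat_btwn (by linarith : y - (q:ℝ) < ε/2)
    have hyq : |y - (q:ℝ)| < (r:ℝ) := by
      rw [abs_lt]; constructor <;> linarith
    have hball : Metric.ball (q:ℝ) (r:ℝ) ⊆ Metric.ball y ε := by
      intro z hz
      rw [Metric.mem_ball] at hz ⊢
      have : |z - (q:ℝ)| < (r:ℝ) := by simpa [Real.dist_eq] using hz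
      rw [Real.dist_eq]
      have : |z - y| ≤ |z - (q:ℝ)| + |(q:ℝ) - y| := abs_sub_le _ _ _
      have h2 : |(q:ℝ) - y| = |y - (q:ℝ)| := abs_sub_comm _ _
      linarith [abs_sub_le z (q:ℝ) y, hyq, abs_sub_comm (q:ℝ) y]
    have hq0 : μ (Metric.ball (q:ℝ) (r:ℝ)) = 0 :=
      le_antisymm (le_trans (measure_mono hball) (le_of_eq hμ)) zero_le
    refine mem_iUnion.2 ⟨(q, r), mem_iUnion.2 ⟨hq0, ?_⟩⟩
    rw [Metric.mem_ball, Real.dist_eq]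
    exact hyq
  refine le_antisymm (le_trans (measure_mono hsub) (le_of_eq ?_)) zero_le
  refine measure_iUnion_null fun p => ?_
  by_cases h : μ (Metric.ball (p.1 : ℝ) (p.2 : ℝ)) = 0 <;> simp [h]

lemma aux_countable_left_gaps (S : Set ℝ) :
    Set.Countable {y | y ∈ S ∧ ∃ x, x < y ∧ Set.Ioo x y ∩ S = ∅} := by
  set T := {y | y ∈ S ∧ ∃ x, x < y ∧ Set.Ioo x y ∩ S = ∅} with hT
  have hch : ∀ y ∈ T, ∃ q : ℚ, ∃ x : ℝ, x ≤ (q:ℝ) ∧ (q:ℝ) < y ∧ Set.Ioo x y ∩ S = ∅ := by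
    rintro y ⟨-, x, hxy, hemp⟩
    obtain ⟨q, hq1, hq2⟩ := exists_rat_btwn hxy
    exact ⟨q, x, hq1.le, hq2, hemp⟩
  choose! q x hq1 hq2 hemp using hch
  have key : ∀ a ∈ T, ∀ b ∈ T, a < b → (q a : ℝ) < (q b : ℝ) := by
    intro a ha b hb hab
    have haS : a ∈ S := ha.1
    have hax : a ≤ x b := by
      by_contra h
      push_neg at h
      have : a ∈ Set.Ioo (x b) b ∩ S := ⟨⟨h, hab⟩, haS⟩
      rw [hemp b hb] at this
      exact this
    calc (q a : ℝ) < a := hq2 a ha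
      _ ≤ x b := hax
      _ ≤ (q b : ℝ) := hq1 b hb
  have hinj : Set.InjOn q T := by
    intro a ha b hb hqq
    rcases lt_trichotomy a b with h | h | h
    · exact absurd (congrArg (fun z : ℚ => (z : ℝ)) hqq) (ne_of_lt (key a ha b hb h))
    · exact h
    · exact absurd (congrArg (fun z : ℚ => (z : ℝ)) hqq.symm) (ne_of_lt (key b hb a ha h))
  exact Set.MapsTo.countable_of_injOn (Set.mapsTo_image q T) hinj (Set.to_countable _)

lemma aux_countable_right_gaps (S : Set ℝ) :
    Set.Countable {y | y ∈ S ∧ ∃ x, y < x ∧ Set.Ioo y x ∩ S = ∅} := by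
  set T := {y | y ∈ S ∧ ∃ x, y < x ∧ Set.Ioo y x ∩ S = ∅} with hT
  have hch : ∀ y ∈ T, ∃ q : ℚ, ∃ x : ℝ, (q:ℝ) ≤ x ∧ y < (q:ℝ) ∧ Set.Ioo y x ∩ S = ∅ := by
    rintro y ⟨-, x, hxy, hemp⟩
    obtain ⟨q, hq1, hq2⟩ := exists_rat_btwn hxy
    exact ⟨q, x, hq2.le, hq1, hemp⟩
  choose! q x hq1 hq2 hemp using hch
  have key : ∀ a ∈ T, ∀ b ∈ T, a < b → (q a : ℝ) < (q b : ℝ) := by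
    intro a ha b hb hab
    have hbS : b ∈ S := hb.1
    have hax : x a ≤ b := by
      by_contra h
      push_neg at h
      have : b ∈ Set.Ioo a (x a) ∩ S := ⟨⟨hab, h⟩, hbS⟩
      rw [hemp a ha] at this
      exact this
    calc (q a : ℝ) ≤ x a := hq1 a ha
      _ ≤ b := hax
      _ < (q b : ℝ) := hq2 b hb
  have hinj : Set.InjOn q T := by
    intro a ha b hb hqq
    rcases lt_trichotomy a b with h | h | h
    · exact absurd (congrArg (fun z : ℚ => (z : ℝ)) hqq) (ne_of_lt (key a ha b hb h))
    · exact h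
    · exact absurd (congrArg (fun z : ℚ => (z : ℝ)) hqq.symm) (ne_of_lt (key b hb a ha h))
  exact Set.MapsTo.countable_of_injOn (Set.mapsTo_image q T) hinj (Set.to_countable _)

lemma aux_l2_tendsto (μ : Measure ℝ) [IsProbabilityMeasure μ] {S : Set ℝ} (hS : μ Sᶜ = 0)
    (R : ℝ) (f : ℕ → ℝ → ℝ) (g : ℝ → ℝ)
    (hfm : ∀ k, Measurable (f k)) (hgm : Measurable g)
    (hfb : ∀ k, ∀ y ∈ S, |f k y| ≤ R) (hgb : ∀ y, |g y| ≤ R)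
    (hae : ∀ᵐ y ∂μ, Tendsto (fun k => f k y) atTop (𝓝 (g y))) :
    Tendsto (fun k => eLpNorm (fun y => f k y - g y) 2 μ) atTop (𝓝 0) := by
  have hSae : ∀ᵐ y ∂μ, y ∈ S := by
    rw [ae_iff]
    exact hS
  have key : Tendsto (fun k => ∫⁻ y, (‖f k y - g y‖₊ : ℝ≥0∞) ^ (2:ℝ) ∂μ) atTop (𝓝 0) := by
    have h0 : (0 : ℝ≥0∞) = ∫⁻ _, 0 ∂μ := by simp
    rw [h0]
    apply tendsto_lintegral_of_dominated_convergence
      (bound := fun _ => ENNReal.ofReal (2*R) ^ (2:ℝ))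
    · intro k
      exact (((hfm k).sub hgm).nnnorm.coe_nnreal_ennreal).pow_const _
    · intro k
      filter_upwards [hSae] with y hy
      have h1 : ‖f k y - g y‖ ≤ 2 * R := by
        have := hfb k y hy
        have := hgb y
        rw [Real.norm_eq_abs]
        calc |f k y - g y| ≤ |f k y| + |g y| := abs_sub _ _
          _ ≤ 2 * R := by linarith
      have h2 : (‖f k y - g y‖₊ : ℝ≥0∞) ≤ ENNReal.ofReal (2*R) := by
        rw [← enorm_eq_nnnorm, ← ofReal_norm]
        exact ENNReal.ofReal_le_ofReal h1
      exact ENNReal.rpow_le_rpow h2 (by norm_num)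
    · simp [ENNReal.rpow_lt_top_of_nonneg, ENNReal.ofReal_ne_top, ENNReal.mul_eq_top,
        (ENNReal.rpow_lt_top_of_nonneg (by norm_num : (0:ℝ) ≤ 2) ENNReal.ofReal_ne_top).ne]
    · filter_upwards [hae] with y hy
      have h1 : Tendsto (fun k => f k y - g y) atTop (𝓝 0) := by
        simpa using hy.sub (tendsto_const_nhds (x := g y))
      have h2 : Tendsto (fun k => (‖f k y - g y‖₊ : ℝ≥0∞)) atTop (𝓝 0) := by
        have := (continuous_nnnorm.tendsto (0:ℝ)).comp h1
        rw [nnnorm_zero] at this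
        exact (ENNReal.tendsto_coe.2 this).mono_right (by simp)
      have h3 := ((ENNReal.continuous_rpow_const (y := (2:ℝ))).tendsto (0:ℝ≥0∞)).comp h2
      simpa [ENNReal.zero_rpow_of_pos (by norm_num : (0:ℝ) < 2), Function.comp_def] using h3
  have h2 : Tendsto (fun k => (∫⁻ y, (‖f k y - g y‖₊ : ℝ≥0∞) ^ (2:ℝ) ∂μ) ^ (1/(2:ℝ)))
      atTop (𝓝 0) := by
    have := ((ENNReal.continuous_rpow_const (y := (1/2:ℝ))).tendsto (0:ℝ≥0∞)).comp key
    simpa [ENNReal.zero_rpow_of_pos (by norm_num : (0:ℝ) < 1/2), Function.comp_def] using this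
  refine h2.congr fun k => ?_
  rw [eLpNorm_eq_lintegral_rpow_enorm_toReal (by norm_num) (by norm_num)]
  norm_num [enorm_eq_nnnorm]

lemma aux_helly (μ : Measure ℝ) [IsProbabilityMeasure μ] {S : Set ℝ} (hS : μ Sᶜ = 0)
    (R : ℝ) (hR : 0 ≤ R) (f : ℕ → ℝ → ℝ)
    (hmono : ∀ n, MonotoneOn (f n) S)
    (hbdd : ∀ n, ∀ y ∈ S, |f n y| ≤ R) :
    ∃ φ : ℕ → ℕ, StrictMono φ ∧ ∃ g : ℝ → ℝ, Monotone g ∧ (∀ y, |g y| ≤ R) ∧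
      ∀ᵐ y ∂μ, Tendsto (fun k => f (φ k) y) atTop (𝓝 (g y)) := by
  -- S is nonempty
  have hSne : S.Nonempty := by
    rcases eq_empty_or_nonempty S with h | h
    · exfalso
      have : μ Sᶜ = 1 := by rw [h, compl_empty]; simp
      rw [hS] at this; exact zero_ne_one this
    · exact h
  obtain ⟨s₀, hs₀⟩ := hSne
  -- countable dense subset of S
  obtain ⟨D₀, hD₀c, hD₀d⟩ := TopologicalSpace.exists_countable_dense (↥S)
  set D : Set ℝ := Subtype.val '' D₀ with hD
  have hDc : D.Countable := hD₀c.image _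
  have hDS : D ⊆ S := by rintro x ⟨⟨x, hx⟩, -, rfl⟩; exact hx
  have hDdense : ∀ s ∈ S, ∀ U : Set ℝ, IsOpen U → s ∈ U → (U ∩ D).Nonempty := by
    intro s hs U hU hsU
    have h1 : (⟨s, hs⟩ : ↥S) ∈ closure D₀ := hD₀d _
    rw [closure_subtype] at h1
    rcases (_root_.mem_closure_iff.1 h1) U hU hsU with ⟨d, hdU, hdD⟩
    exact ⟨d, hdU, hdD⟩
  -- atoms
  set At : Set ℝ := {x | 0 < μ {x}} with hAt
  have hAtc : At.Countable := by
    have := Measure.countable_meas_pos_of_disjoint_iUnion (μ := μ)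
      (As := fun x : ℝ => {x}) (fun x => measurableSet_singleton x)
      (fun x y hxy => by simp [Function.onFun, disjoint_singleton, hxy])
    exact this
  have hAtS : At ⊆ S := by
    intro x hx
    by_contra hxS
    have : μ {x} ≤ μ Sᶜ := measure_mono (by simpa using hxS)
    rw [hS] at this
    exact absurd (le_antisymm this zero_le) (ne_of_gt hx)
  -- enumeration of E = D ∪ At ∪ {s₀}
  set E : Set ℝ := D ∪ At ∪ {s₀} with hE
  have hEc : E.Countable := ((hDc.union hAtc).union (countable_singleton s₀))
  have hES : E ⊆ S := by
    rintro x ((h | h) | h)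
    · exact hDS h
    · exact hAtS h
    · rw [mem_singleton_iff] at h; subst h; exact hs₀
  obtain ⟨e, hee⟩ := hEc.exists_eq_range ⟨s₀, Or.inr rfl⟩
  have heS : ∀ n, e n ∈ S := fun n => hES (hee ▸ mem_range_self n)
  -- compactness in the product of intervals
  set P := ℕ → Icc (-R) R with hP
  have hfmem : ∀ k n, f k (e n) ∈ Icc (-R) R := by
    intro k n
    have := hbdd k (e n) (heS n)
    rw [abs_le] at this
    exact this
  set F : ℕ → P := fun k n => ⟨f k (e n), hfmem k n⟩ with hF
  obtain ⟨G, -, φ, hφ, hGconv⟩ := isCompact_univ.tendsto_subseq (fun k => Set.mem_univ (F k))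
  have hG : ∀ n, Tendsto (fun k => f (φ k) (e n)) atTop (𝓝 ((G n : ℝ))) := by
    intro n
    have h1 : Tendsto (fun k => (F (φ k)) n) atTop (𝓝 (G n)) := by
      exact (tendsto_pi_nhds.1 hGconv) n
    exact (continuous_subtype_val.tendsto (G n)).comp h1
  set Gr : ℕ → ℝ := fun n => (G n : ℝ) with hGr
  have hGrmem : ∀ n, Gr n ∈ Icc (-R) R := fun n => (G n).2
  have hGmono : ∀ m n, e m ≤ e n → Gr m ≤ Gr n := by
    intro m n hmn
    exact le_of_tendsto_of_tendsto' (hG m) (hG n)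
      (fun k => hmono (φ k) (heS m) (heS n) hmn)
  -- the limit function
  set g : ℝ → ℝ := fun y => sSup (insert (-R) (Gr '' {n | e n ≤ y})) with hg
  have hgbddAbove : ∀ y, ∀ x ∈ insert (-R) (Gr '' {n | e n ≤ y}), x ≤ R := by
    rintro y x (rfl | ⟨n, -, rfl⟩)
    · linarith
    · exact (hGrmem n).2
  have hgBdd : ∀ y, BddAbove (insert (-R) (Gr '' {n | e n ≤ y})) :=
    fun y => ⟨R, fun x hx => hgbddAbove y x hx⟩
  have hgmono : Monotone g := by
    intro a b hab
    exact csSup_le_csSup (hgBdd b) (insert_nonempty _ _)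
      (insert_subset_insert (image_mono (fun n (hn : e n ≤ a) => le_trans hn hab)))
  have hglb : ∀ y, -R ≤ g y := fun y => le_csSup (hgBdd y) (mem_insert _ _)
  have hgub : ∀ y, g y ≤ R := fun y => csSup_le (insert_nonempty _ _) (hgbddAbove y)
  have hgabs : ∀ y, |g y| ≤ R := fun y => abs_le.2 ⟨hglb y, hgub y⟩
  have hge : ∀ n, g (e n) = Gr n := by
    intro n
    apply le_antisymm
    · apply csSup_le (insert_nonempty _ _)
      rintro x (rfl | ⟨m, hm, rfl⟩)
      · exact (hGrmem n).1
      · exact hGmono m n hm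
    · exact le_csSup (hgBdd _) (mem_insert_of_mem _ ⟨n, show e n ≤ e n from le_rfl, rfl⟩)
  have hconv_e : ∀ n, Tendsto (fun k => f (φ k) (e n)) atTop (𝓝 (g (e n))) := by
    intro n; rw [hge n]; exact hG n
  -- bad sets
  have hNCc : Set.Countable {x | ¬ContinuousAt g x} := hgmono.countable_not_continuousAt
  set LIso := {y | y ∈ S ∧ ∃ x, x < y ∧ Set.Ioo x y ∩ S = ∅} with hLIso
  set RIso := {y | y ∈ S ∧ ∃ x, y < x ∧ Set.Ioo y x ∩ S = ∅} with hRIso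
  set C : Set ℝ := (LIso ∪ RIso ∪ {x | ¬ContinuousAt g x}) \ E with hC
  have hCc : C.Countable :=
    (((aux_countable_left_gaps S).union (aux_countable_right_gaps S)).union hNCc).mono
      diff_subset
  have hCnull : μ C = 0 := by
    have h1 : ∀ y ∈ C, μ {y} = 0 := by
      intro y hy
      by_contra h
      have : y ∈ At := by
        rw [hAt, mem_setOf_eq]
        exact lt_of_le_of_ne zero_le (Ne.symm h)
      exact hy.2 (Or.inl (Or.inr this))
    calc μ C = μ (⋃ y ∈ C, {y}) := by rw [biUnion_of_singleton]
      _ = 0 := (measure_biUnion_null_iff hCc).2 h1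
  -- the a.e. convergence
  refine ⟨φ, hφ, g, hgmono, hgabs, ?_⟩
  have hSae : ∀ᵐ y ∂μ, y ∈ S := by rw [ae_iff]; exact hS
  have hCae : ∀ᵐ y ∂μ, y ∉ C := by rw [ae_iff]; simpa using hCnull
  filter_upwards [hSae, hCae] with y hyS hyC
  -- case y ∈ E
  by_cases hyE : y ∈ E
  · rw [hee] at hyE
    obtain ⟨n, rfl⟩ := hyE
    exact hconv_e n
  -- main case
  have hyL : y ∉ LIso := fun h => hyC ⟨Or.inl (Or.inl h), hyE⟩
  have hyR : y ∉ RIso := fun h => hyC ⟨Or.inl (Or.inr h), hyE⟩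
  have hyNC : ContinuousAt g y := by
    by_contra h
    exact hyC ⟨Or.inr h, hyE⟩
  have hleft : ∀ x < y, (Set.Ioo x y ∩ S).Nonempty := by
    intro x hx
    rcases eq_empty_or_nonempty (Set.Ioo x y ∩ S) with h | h
    · exact absurd ⟨hyS, x, hx, h⟩ hyL
    · exact h
  have hright : ∀ x, y < x → (Set.Ioo y x ∩ S).Nonempty := by
    intro x hx
    rcases eq_empty_or_nonempty (Set.Ioo y x ∩ S) with h | h
    · exact absurd ⟨hyS, x, hx, h⟩ hyR
    · exact h
  rw [tendsto_order]
  constructor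
  · -- ∀ b < g y, eventually b < f (φ k) y
    intro b hb
    have h1 : g ⁻¹' (Set.Ioi b) ∈ 𝓝 y := hyNC.preimage_mem_nhds (isOpen_Ioi.mem_nhds hb)
    obtain ⟨δ, hδ, hball⟩ := Metric.mem_nhds_iff.1 h1
    obtain ⟨s, hs1, hs2⟩ := hleft (y - δ/2) (by linarith)
    obtain ⟨d, hd1, hd2⟩ := hDdense s hs2 (Set.Ioo (y - δ) y)
      isOpen_Ioo ⟨by rcases hs1 with ⟨h, _⟩; linarith, hs1.2⟩
    have hdE : d ∈ E := Or.inl (Or.inl hd2)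
    rw [hee] at hdE
    obtain ⟨m, rfl⟩ := hdE
    have hem_ball : e m ∈ Metric.ball y δ := by
      rw [Metric.mem_ball, Real.dist_eq, abs_lt]
      constructor <;> [linarith [hd1.1]; linarith [hd1.2]]
    have hbG : b < Gr m := by
      have hmem := hball hem_ball
      rw [mem_preimage, mem_Ioi, hge m] at hmem
      exact hmem
    have h2 : ∀ᶠ k in atTop, b < f (φ k) (e m) :=
      (hG m).eventually (eventually_gt_nhds hbG)
    filter_upwards [h2] with k hk
    exact lt_of_lt_of_le hk (hmono (φ k) (heS m) hyS hd1.2.le)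
  · intro b hb
    have h1 : g ⁻¹' (Set.Iio b) ∈ 𝓝 y := hyNC.preimage_mem_nhds (isOpen_Iio.mem_nhds hb)
    obtain ⟨δ, hδ, hball⟩ := Metric.mem_nhds_iff.1 h1
    obtain ⟨s, hs1, hs2⟩ := hright (y + δ/2) (by linarith)
    obtain ⟨d, hd1, hd2⟩ := hDdense s hs2 (Set.Ioo y (y + δ))
      isOpen_Ioo ⟨hs1.1, by rcases hs1 with ⟨_, h⟩; linarith⟩
    have hdE : d ∈ E := Or.inl (Or.inl hd2)
    rw [hee] at hdE
    obtain ⟨m, rfl⟩ := hdE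
    have hem_ball : e m ∈ Metric.ball y δ := by
      rw [Metric.mem_ball, Real.dist_eq, abs_lt]
      constructor <;> [linarith [hd1.1]; linarith [hd1.2]]
    have hbG : Gr m < b := by
      have hmem := hball hem_ball
      rw [mem_preimage, mem_Iio, hge m] at hmem
      exact hmem
    have h2 : ∀ᶠ k in atTop, f (φ k) (e m) < b :=
      (hG m).eventually (eventually_lt_nhds hbG)
    filter_upwards [h2] with k hk
    exact lt_of_le_of_lt (hmono (φ k) hyS (heS m) hd1.1.le) hk

/-- **Theorem 5.2.** If the sticky particles flow is uniformly bounded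
on the support of `ρ0` and satisfies the key projection identity, then `X(t,·)` has a
strong `L²(ρ0)` limit as `t → ∞`.  Here the support of `ρ0` is the set of points all
of whose neighborhoods have positive mass. -/
theorem bounded_flow_has_strong_asymptotic_limit
    (ρ0 : Measure ℝ) [IsProbabilityMeasure ρ0]
    (hmom : MemLp (fun y : ℝ => y) 2 ρ0)
    (v0 : ℝ → ℝ) (hv0 : MemLp v0 2 ρ0)
    (X : ℝ → ℝ → ℝ)
    (hXmeas : ∀ t : ℝ, 0 ≤ t → Measurable (X t))
    (hXmono : ∀ t : ℝ, 0 ≤ t →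
      MonotoneOn (X t) {y : ℝ | ∀ ε > (0:ℝ), 0 < ρ0 (Metric.ball y ε)})
    (R : ℝ) (hR : 0 < R)
    (hXbdd : ∀ t : ℝ, 0 ≤ t →
      ∀ y ∈ {y : ℝ | ∀ ε > (0:ℝ), 0 < ρ0 (Metric.ball y ε)}, |X t y| ≤ R)
    (hkey : ∀ s t : ℝ, 0 ≤ s → s ≤ t →
      (∫ y, X t y * X s y ∂ρ0) = ∫ y, X t y * (y + s * v0 y) ∂ρ0) :
    ∃ Xinf : ℝ → ℝ, MemLp Xinf 2 ρ0 ∧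
      Filter.Tendsto (fun t : ℝ => eLpNorm (fun y => X t y - Xinf y) 2 ρ0)
        Filter.atTop (nhds 0) := by
  have hSnull : ρ0 {y : ℝ | ∀ ε > (0:ℝ), 0 < ρ0 (Metric.ball y ε)}ᶜ = 0 :=
    aux_support_compl_null ρ0
  set Sset : Set ℝ := {y : ℝ | ∀ ε > (0:ℝ), 0 < ρ0 (Metric.ball y ε)} with hSset
  have hSae : ∀ᵐ y ∂ρ0, y ∈ Sset := by rw [ae_iff]; exact hSnull
  have memX : ∀ t, 0 ≤ t → MemLp (X t) 2 ρ0 := by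
    intro t ht
    refine MemLp.of_bound (hXmeas t ht).aestronglyMeasurable R ?_
    filter_upwards [hSae] with y hy
    simpa [Real.norm_eq_abs] using hXbdd t ht y hy
  set F : ℝ → Lp ℝ 2 ρ0 :=
    fun t => if h : 0 ≤ t then (memX t h).toLp (X t) else 0 with hFdef
  set A : Lp ℝ 2 ρ0 := hmom.toLp _ with hAdef
  set V : Lp ℝ 2 ρ0 := hv0.toLp v0 with hVdef
  have hFcoe : ∀ t, 0 ≤ t → (⇑(F t) : ℝ → ℝ) =ᵐ[ρ0] X t := by
    intro t ht
    rw [hFdef]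
    simp only [dif_pos ht]
    exact MemLp.coeFn_toLp _
  -- inner products as integrals
  have hip : ∀ P Q : Lp ℝ 2 ρ0, ⟪P, Q⟫ = ∫ y, P y * Q y ∂ρ0 := by
    intro P Q
    rw [MeasureTheory.L2.inner_def]
    apply integral_congr_ae
    filter_upwards with y
    simp [RCLike.inner_apply, conj_trivial, mul_comm]
  -- the key identity at the level of L²
  have hFinner : ∀ s t : ℝ, 0 ≤ s → s ≤ t →
      ⟪F t, F s⟫ = ⟪F t, A⟫ + s * ⟪F t, V⟫ := by
    intro s t hs hst
    have ht : 0 ≤ t := hs.trans hst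
    have h1 : ⟪F t, F s⟫ = ∫ y, X t y * X s y ∂ρ0 := by
      rw [hip]
      apply integral_congr_ae
      filter_upwards [hFcoe t ht, hFcoe s hs] with y ha hb
      rw [ha, hb]
    have h2 : ⟪F t, A + s • V⟫ = ∫ y, X t y * (y + s * v0 y) ∂ρ0 := by
      rw [hip]
      apply integral_congr_ae
      filter_upwards [hFcoe t ht, Lp.coeFn_add A (s • V), Lp.coeFn_smul s V,
        hmom.coeFn_toLp, hv0.coeFn_toLp] with y ha hb hc hd he
      rw [ha, hb]
      simp only [Pi.add_apply]
      rw [hc]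
      simp only [Pi.smul_apply, smul_eq_mul]
      rw [← hAdef] at hd
      rw [hd, he]
    have h3 : ⟪F t, A + s • V⟫ = ⟪F t, A⟫ + s * ⟪F t, V⟫ := by
      rw [inner_add_right, real_inner_smul_right]
    rw [← h3, h1, hkey s t hs hst]
    exact h2.symm
  -- norm bound
  have hFnorm : ∀ t, 0 ≤ t → ‖F t‖ ≤ R := by
    intro t ht
    rw [hFdef]
    simp only [dif_pos ht]
    rw [Lp.norm_toLp]
    have hb : eLpNorm (X t) 2 ρ0 ≤ ENNReal.ofReal R := by
      have := eLpNorm_le_of_ae_bound (p := 2) (μ := ρ0) (f := X t) (C := R)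
        (by filter_upwards [hSae] with y hy; simpa [Real.norm_eq_abs] using hXbdd t ht y hy)
      simpa using this
    calc (eLpNorm (X t) 2 ρ0).toReal ≤ (ENNReal.ofReal R).toReal :=
          ENNReal.toReal_mono ENNReal.ofReal_ne_top hb
      _ = R := ENNReal.toReal_ofReal hR.le
  -- ⟪F t, V⟫ → 0
  have hVlim : Tendsto (fun t => ⟪F t, V⟫) atTop (𝓝 0) := by
    have hbound : ∀ t : ℝ, 1 ≤ t → |⟪F t, V⟫| ≤ (R^2 + R * ‖A‖) / t := by
      intro t ht
      have ht0 : 0 ≤ t := le_trans zero_le_one ht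
      have htpos : 0 < t := lt_of_lt_of_le zero_lt_one ht
      have h1 := hFinner t t ht0 le_rfl
      have h2 : t * ⟪F t, V⟫ = ⟪F t, F t⟫ - ⟪F t, A⟫ := by linarith
      have h3 : |t * ⟪F t, V⟫| ≤ R^2 + R * ‖A‖ := by
        rw [h2]
        have ha : |⟪F t, F t⟫| ≤ R^2 := by
          rw [real_inner_self_eq_norm_sq]
          rw [abs_of_nonneg (by positivity)]
          have := hFnorm t ht0
          have h0 : (0:ℝ) ≤ ‖F t‖ := norm_nonneg _
          nlinarith
        have hb : |⟪F t, A⟫| ≤ R * ‖A‖ :=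
          le_trans (abs_real_inner_le_norm _ _)
            (mul_le_mul_of_nonneg_right (hFnorm t ht0) (norm_nonneg _))
        calc |⟪F t, F t⟫ - ⟪F t, A⟫| ≤ |⟪F t, F t⟫| + |⟪F t, A⟫| := abs_sub _ _
          _ ≤ R^2 + R * ‖A‖ := add_le_add ha hb
      rw [abs_mul, abs_of_pos htpos] at h3
      calc |⟪F t, V⟫| = (t * |⟪F t, V⟫|) / t := by field_simp
        _ ≤ (R^2 + R * ‖A‖) / t := by gcongr
    apply squeeze_zero_norm' (a := fun t => (R^2 + R * ‖A‖) / t)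
    · filter_upwards [eventually_ge_atTop (1:ℝ)] with t ht
      simpa [Real.norm_eq_abs] using hbound t ht
    · exact tendsto_const_nhds.div_atTop tendsto_id
  -- compactness: every sequence going to infinity has a strongly convergent sub-subsequence
  have hcpt : ∀ u : ℕ → ℝ, Tendsto u atTop atTop →
      ∃ ψ : ℕ → ℕ, StrictMono ψ ∧ ∃ Z : Lp ℝ 2 ρ0,
        Tendsto (fun k => F (u (ψ k))) atTop (𝓝 Z) := by
    intro u hu
    obtain ⟨N, hN⟩ := (hu.eventually (eventually_ge_atTop (0:ℝ))).exists_forall_of_atTop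
    set u' : ℕ → ℝ := fun k => u (k + N) with hu'def
    have hu'nn : ∀ k, 0 ≤ u' k := fun k => hN (k + N) (Nat.le_add_left _ _)
    obtain ⟨φ, hφ, g, hgmono, hgabs, hgae⟩ := aux_helly ρ0 hSnull R hR.le
      (fun k => X (u' k)) (fun k => hXmono (u' k) (hu'nn k))
      (fun k => hXbdd (u' k) (hu'nn k))
    have hgmem : MemLp g 2 ρ0 :=
      MemLp.of_bound hgmono.measurable.aestronglyMeasurable R
        (Eventually.of_forall fun y => by simpa [Real.norm_eq_abs] using hgabs y)
    set Z : Lp ℝ 2 ρ0 := hgmem.toLp g with hZdef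
    have hLp : Tendsto (fun k => eLpNorm (fun y => X (u' (φ k)) y - g y) 2 ρ0)
        atTop (𝓝 0) := by
      refine aux_l2_tendsto ρ0 hSnull R (fun k => X (u' (φ k))) g
        (fun k => hXmeas _ (hu'nn (φ k))) hgmono.measurable
        (fun k => hXbdd _ (hu'nn (φ k))) hgabs hgae
    have hedist : ∀ k, edist (F (u' (φ k))) Z =
        eLpNorm (fun y => X (u' (φ k)) y - g y) 2 ρ0 := by
      intro k
      rw [Lp.edist_def]
      apply eLpNorm_congr_ae
      filter_upwards [hFcoe (u' (φ k)) (hu'nn (φ k)), hgmem.coeFn_toLp] with y h1 h2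
      simp only [Pi.sub_apply]
      rw [h1]
      rw [← hZdef] at h2
      rw [h2]
    have hZconv : Tendsto (fun k => F (u' (φ k))) atTop (𝓝 Z) := by
      rw [EMetric.tendsto_atTop]
      intro ε hε
      have := (hLp.eventually (eventually_lt_nhds hε)).and (Eventually.of_forall fun k => trivial)
      rw [eventually_atTop] at this
      obtain ⟨N₁, hN₁⟩ := this
      exact ⟨N₁, fun k hk => by rw [hedist k]; exact (hN₁ k hk).1⟩
    refine ⟨fun k => φ k + N, ?_, Z, hZconv⟩
    intro a b hab
    exact add_lt_add_left (hφ hab) N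
  -- limits of inner products
  have hlim1 : ∀ (u : ℕ → ℝ), Tendsto u atTop atTop → ∀ (Z : Lp ℝ 2 ρ0),
      Tendsto (fun n => F (u n)) atTop (𝓝 Z) → ∀ s : ℝ, 0 ≤ s → ⟪Z, F s⟫ = ⟪Z, A⟫ := by
    intro u hu Z hZ s hs
    have h1 : Tendsto (fun n => ⟪F (u n), F s⟫) atTop (𝓝 ⟪Z, F s⟫) :=
      hZ.inner tendsto_const_nhds
    have h2 : Tendsto (fun n => ⟪F (u n), A⟫ + s * ⟪F (u n), V⟫) atTop (𝓝 (⟪Z, A⟫ + s * 0)) := by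
      refine Tendsto.add (hZ.inner tendsto_const_nhds) (Tendsto.const_mul s ?_)
      have : Tendsto (fun n => ⟪F (u n), V⟫) atTop (𝓝 0) := by
        have := hVlim.comp hu
        exact this.congr fun n => rfl
      exact this
    have heq : ∀ᶠ n in atTop, ⟪F (u n), F s⟫ = ⟪F (u n), A⟫ + s * ⟪F (u n), V⟫ := by
      filter_upwards [hu.eventually (eventually_ge_atTop s)] with n hn
      exact hFinner s (u n) hs hn
    have h3 : Tendsto (fun n => ⟪F (u n), F s⟫) atTop (𝓝 (⟪Z, A⟫ + s * 0)) :=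
      Tendsto.congr' (heq.mono fun n hn => hn.symm) h2
    have := tendsto_nhds_unique h1 h3
    rw [this, mul_zero, add_zero]
  have hlim2 : ∀ (u : ℕ → ℝ), Tendsto u atTop atTop → ∀ (Z : Lp ℝ 2 ρ0),
      Tendsto (fun n => F (u n)) atTop (𝓝 Z) →
      ∀ (w : ℕ → ℝ), Tendsto w atTop atTop → ∀ (Z' : Lp ℝ 2 ρ0),
      Tendsto (fun n => F (w n)) atTop (𝓝 Z') → ⟪Z, Z'⟫ = ⟪Z, A⟫ := by
    intro u hu Z hZ w hw Z' hZ'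
    have h1 : Tendsto (fun m => ⟪Z, F (w m)⟫) atTop (𝓝 ⟪Z, Z'⟫) :=
      Tendsto.inner tendsto_const_nhds hZ'
    have h2 : ∀ᶠ m in atTop, ⟪Z, F (w m)⟫ = ⟪Z, A⟫ := by
      filter_upwards [hw.eventually (eventually_ge_atTop (0:ℝ))] with m hm
      exact hlim1 u hu Z hZ (w m) hm
    have h3 : Tendsto (fun m => ⟪Z, F (w m)⟫) atTop (𝓝 ⟪Z, A⟫) :=
      Tendsto.congr' (h2.mono fun m hm => hm.symm) tendsto_const_nhds
    exact tendsto_nhds_unique h1 h3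
  -- uniqueness of subsequential limits
  have huniq : ∀ (u : ℕ → ℝ), Tendsto u atTop atTop → ∀ (Z : Lp ℝ 2 ρ0),
      Tendsto (fun n => F (u n)) atTop (𝓝 Z) →
      ∀ (w : ℕ → ℝ), Tendsto w atTop atTop → ∀ (Z' : Lp ℝ 2 ρ0),
      Tendsto (fun n => F (w n)) atTop (𝓝 Z') → Z = Z' := by
    intro u hu Z hZ w hw Z' hZ'
    have e1 : ⟪Z, Z'⟫ = ⟪Z, A⟫ := hlim2 u hu Z hZ w hw Z' hZ'
    have e2 : ⟪Z, Z⟫ = ⟪Z, A⟫ := hlim2 u hu Z hZ u hu Z hZ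
    have e3 : ⟪Z', Z⟫ = ⟪Z', A⟫ := hlim2 w hw Z' hZ' u hu Z hZ
    have e4 : ⟪Z', Z'⟫ = ⟪Z', A⟫ := hlim2 w hw Z' hZ' w hw Z' hZ'
    have e5 : ⟪Z', A⟫ = ⟪Z, A⟫ := by rw [← e3, real_inner_comm, e1]
    have hnorm : ‖Z - Z'‖^2 = 0 := by
      rw [norm_sub_sq_real, ← real_inner_self_eq_norm_sq, ← real_inner_self_eq_norm_sq Z',
        e2, e4, e1, e5]
      ring
    have : Z - Z' = 0 := by
      have := pow_eq_zero_iff (n := 2) (by norm_num) |>.1 hnorm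
      exact norm_eq_zero.1 this
    exact sub_eq_zero.1 this
  -- the limit
  obtain ⟨ψ₀, hψ₀, Z₀, hZ₀⟩ := hcpt (fun n : ℕ => (n : ℝ)) tendsto_natCast_atTop_atTop
  have hu₀ : Tendsto (fun k => ((ψ₀ k : ℕ) : ℝ)) atTop atTop :=
    tendsto_natCast_atTop_atTop.comp hψ₀.tendsto_atTop
  -- F t → Z₀
  have hFlim : Tendsto F atTop (𝓝 Z₀) := by
    apply tendsto_of_seq_tendsto
    intro x hx
    apply tendsto_of_subseq_tendsto
    intro ns hns
    obtain ⟨ψ, hψ, Z, hZ⟩ := hcpt (x ∘ ns) (hx.comp hns)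
    have hZeq : Z = Z₀ :=
      huniq ((x ∘ ns) ∘ ψ) ((hx.comp hns).comp hψ.tendsto_atTop) Z hZ
        (fun k => ((ψ₀ k : ℕ) : ℝ)) hu₀ Z₀ hZ₀
    exact ⟨ψ, by rw [← hZeq]; exact hZ⟩
  refine ⟨⇑Z₀, Lp.memLp Z₀, ?_⟩
  have hdist : Tendsto (fun t => dist (F t) Z₀) atTop (𝓝 0) :=
    tendsto_iff_dist_tendsto_zero.1 hFlim
  have hofreal : Tendsto (fun t => ENNReal.ofReal (dist (F t) Z₀)) atTop (𝓝 0) := by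
    have := (ENNReal.continuous_ofReal.tendsto 0).comp hdist
    simpa [Function.comp_def] using this
  apply Tendsto.congr' ?_ hofreal
  filter_upwards [eventually_ge_atTop (0:ℝ)] with t ht
  rw [← edist_dist, Lp.edist_def]
  apply eLpNorm_congr_ae
  filter_upwards [hFcoe t ht] with y h1
  simp only [Pi.sub_apply]
  rw [h1]
end

section
/- Let ρ0 be a Borel probability measure on ℝ with finite second moment and v0 ∈ L²(ρ0). Let X : [0,∞) × ℝ → ℝ be such that for each t ≥ 0 the map y ↦ X(t,y) is Borel with X(t,·) ∈ L²(ρ0), sup_{t ≥ 0} ‖X(t,·)‖_{L²(ρ0)} < ∞, and for all 0 ≤ s ≤ t, ∫_ℝ X(t,y)X(s,y)ρ0(dy) = ∫_ℝ X(t,y)[y + s·v0(y)]ρ0(dy). Then there exists X_∞ ∈ L²(ρ0) such that X(t,·) converges weakly in L²(ρ0) to X_∞ as t → ∞. -/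
open MeasureTheory
open scoped RealInnerProductSpace

private lemma inner_toLp_eq {ρ0 : Measure ℝ} (F : Lp ℝ 2 ρ0) {g : ℝ → ℝ}
    (hg : MemLp g 2 ρ0) : ⟪F, hg.toLp g⟫ = ∫ y, F y * g y ∂ρ0 := by
  rw [L2.inner_def]
  refine integral_congr_ae ?_
  filter_upwards [hg.coeFn_toLp] with y hy
  rw [hy, RCLike.inner_apply, RCLike.conj_to_real, mul_comm]


/-- If the sticky particles flow is merely bounded in `L²(ρ0)`
uniformly in time and satisfies the key projection identity, then `X(t,·)` converges
weakly in `L²(ρ0)` as `t → ∞`. -/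
theorem bounded_flow_has_weak_asymptotic_limit
    (ρ0 : Measure ℝ) [IsProbabilityMeasure ρ0]
    (hmom : MemLp (fun y : ℝ => y) 2 ρ0)
    (v0 : ℝ → ℝ) (hv0 : MemLp v0 2 ρ0)
    (X : ℝ → ℝ → ℝ)
    (hXmeas : ∀ t : ℝ, 0 ≤ t → Measurable (X t))
    (hXL2 : ∀ t : ℝ, 0 ≤ t → MemLp (X t) 2 ρ0)
    (hXbdd : ∃ C : ℝ, ∀ t : ℝ, 0 ≤ t → (∫ y, (X t y) ^ 2 ∂ρ0) ≤ C)
    (hkey : ∀ s t : ℝ, 0 ≤ s → s ≤ t →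
      (∫ y, X t y * X s y ∂ρ0) = ∫ y, X t y * (y + s * v0 y) ∂ρ0) :
    ∃ Xinf : ℝ → ℝ, MemLp Xinf 2 ρ0 ∧
      ∀ g : ℝ → ℝ, MemLp g 2 ρ0 →
        Filter.Tendsto (fun t : ℝ => ∫ y, X t y * g y ∂ρ0)
          Filter.atTop (nhds (∫ y, Xinf y * g y ∂ρ0)) := by
  classical
  obtain ⟨C, hC⟩ := hXbdd
  -- Lp elements
  set H := Lp ℝ 2 ρ0 with hH
  let Y : ℝ → H := fun t => if ht : 0 ≤ t then (hXL2 t ht).toLp (X t) else 0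
  have hYdef : ∀ t (ht : 0 ≤ t), Y t = (hXL2 t ht).toLp (X t) := fun t ht => dif_pos ht
  let I : H := hmom.toLp _
  let V : H := hv0.toLp v0
  have hE : ∀ s : ℝ, MemLp (fun y : ℝ => y + s * v0 y) 2 ρ0 :=
    fun s => hmom.add (hv0.const_mul s)
  have hEs : ∀ s : ℝ, (hE s).toLp _ = I + s • V := by
    intro s
    refine Lp.ext ?_
    filter_upwards [(hE s).coeFn_toLp, Lp.coeFn_add I (s • V), Lp.coeFn_smul (s : ℝ) V,
      hmom.coeFn_toLp, hv0.coeFn_toLp] with y h1 h2 h3 h4 h5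
    rw [h1, h2]
    simp only [Pi.add_apply]
    rw [h3, h4]
    simp only [Pi.smul_apply, smul_eq_mul, V, h5]
  -- norm bound
  set B : ℝ := Real.sqrt C with hB
  have hBnn : 0 ≤ B := Real.sqrt_nonneg C
  have hYnorm : ∀ t : ℝ, 0 ≤ t → ‖Y t‖ ≤ B := by
    intro t ht
    have h1 : ⟪Y t, Y t⟫ = ∫ y, (Y t) y * X t y ∂ρ0 := by
      have h := inner_toLp_eq (Y t) (hXL2 t ht)
      rwa [← hYdef t ht] at h
    have h2 : (∫ y, (Y t) y * X t y ∂ρ0) = ∫ y, (X t y) ^ 2 ∂ρ0 := by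
      refine integral_congr_ae ?_
      have := hYdef t ht
      filter_upwards [(hXL2 t ht).coeFn_toLp] with y hy
      rw [this]
      rw [hy, sq]
    have h3 : ‖Y t‖ ^ 2 ≤ C := by
      rw [← real_inner_self_eq_norm_sq, h1, h2]; exact hC t ht
    have h4 := Real.sqrt_le_sqrt h3
    rwa [Real.sqrt_sq (norm_nonneg _)] at h4
  -- the subspace
  let D : {s : ℝ // 0 ≤ s} → H := fun s => Y s.1 - (I + s.1 • V)
  let S : Submodule ℝ H := Submodule.span ℝ (Set.range D)
  let M : Submodule ℝ H := S.topologicalClosure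
  haveI : CompleteSpace M := S.isClosed_topologicalClosure.completeSpace_coe
  -- orthogonality
  have horth : ∀ s t : ℝ, 0 ≤ s → s ≤ t → ⟪Y t, Y s - (I + s • V)⟫ = 0 := by
    intro s t hs hst
    have ht : (0:ℝ) ≤ t := le_trans hs hst
    have h1 : ⟪Y t, Y s⟫ = ∫ y, (Y t) y * X s y ∂ρ0 := by
      have h := inner_toLp_eq (Y t) (hXL2 s hs)
      rwa [← hYdef s hs] at h
    have h2 : ⟪Y t, I + s • V⟫ = ∫ y, (Y t) y * (y + s * v0 y) ∂ρ0 := by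
      rw [← hEs s]
      exact inner_toLp_eq (Y t) (hE s)
    rw [inner_sub_right, h1, h2]
    have e1 : (∫ y, (Y t) y * X s y ∂ρ0) = ∫ y, X t y * X s y ∂ρ0 := by
      refine integral_congr_ae ?_
      have := hYdef t ht
      filter_upwards [(hXL2 t ht).coeFn_toLp] with y hy
      rw [this, hy]
    have e2 : (∫ y, (Y t) y * (y + s * v0 y) ∂ρ0) = ∫ y, X t y * (y + s * v0 y) ∂ρ0 := by
      refine integral_congr_ae ?_
      have := hYdef t ht
      filter_upwards [(hXL2 t ht).coeFn_toLp] with y hy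
      rw [this, hy]
    rw [e1, e2, hkey s t hs hst, sub_self]
  -- projection onto orthogonal complement
  let Q : H → H := fun x => (Submodule.orthogonalProjectionOnto Mᗮ x : H)
  have hQadd : ∀ x y : H, Q (x + y) = Q x + Q y := by
    intro x y; simp only [Q, map_add, Submodule.coe_add]
  have hQsmul : ∀ (c : ℝ) (x : H), Q (c • x) = c • Q x := by
    intro c x; simp only [Q, ContinuousLinearMap.map_smul, Submodule.coe_smul]
  have hQnorm : ∀ x : H, ‖Q x‖ ≤ ‖x‖ := by
    intro x
    calc ‖Q x‖ = ‖Submodule.orthogonalProjectionOnto Mᗮ x‖ := rfl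
      _ ≤ ‖Submodule.orthogonalProjectionOnto Mᗮ‖ * ‖x‖ := (Submodule.orthogonalProjectionOnto Mᗮ).le_opNorm x
      _ ≤ 1 * ‖x‖ := by
          exact mul_le_mul_of_nonneg_right (Submodule.orthogonalProjectionOnto_norm_le _) (norm_nonneg x)
      _ = ‖x‖ := one_mul _
  have hQzero : ∀ x ∈ M, Q x = 0 := by
    intro x hx
    simp only [Q, Submodule.orthogonalProjectionOnto_orthogonal_apply_eq_zero hx,
      Submodule.coe_zero]
  have hDM : ∀ s : {s : ℝ // 0 ≤ s}, D s ∈ M :=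
    fun s => S.le_topologicalClosure (Submodule.subset_span ⟨s, rfl⟩)
  -- Q (Y t) is constant
  have hQY : ∀ t : ℝ, 0 ≤ t → Q (Y t) = Q I + t • Q V := by
    intro t ht
    have : Y t = D ⟨t, ht⟩ + (I + t • V) := by simp [D]
    rw [this, hQadd, hQzero _ (hDM ⟨t, ht⟩), zero_add, hQadd, hQsmul]
  have hQV : Q V = 0 := by
    by_contra hne
    have hpos : 0 < ‖Q V‖ := norm_pos_iff.mpr hne
    set t : ℝ := (B + ‖Q I‖ + 1) / ‖Q V‖ with htdef
    have htnn : 0 ≤ t := by positivity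
    have h1 : ‖t • Q V‖ ≤ B + ‖Q I‖ := by
      have : t • Q V = Q (Y t) - Q I := by rw [hQY t htnn]; abel
      rw [this]
      calc ‖Q (Y t) - Q I‖ ≤ ‖Q (Y t)‖ + ‖Q I‖ := norm_sub_le _ _
        _ ≤ B + ‖Q I‖ := by
            have := (hQnorm (Y t)).trans (hYnorm t htnn)
            linarith
    have h2 : ‖t • Q V‖ = B + ‖Q I‖ + 1 := by
      rw [norm_smul, Real.norm_eq_abs, abs_of_nonneg htnn, htdef,
        div_mul_cancel₀ _ (ne_of_gt hpos)]
    have : (0:ℝ) ≤ ‖Q I‖ := norm_nonneg _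
    linarith [h1, h2.symm.le]
  have hQYconst : ∀ t : ℝ, 0 ≤ t → Q (Y t) = Q I := by
    intro t ht; rw [hQY t ht, hQV, smul_zero, add_zero]
  -- conclusion
  refine ⟨(Q I : ℝ → ℝ), Lp.memLp _, ?_⟩
  intro g hg
  set G : H := hg.toLp g with hG
  have hlim1 : (∫ y, (Q I : ℝ → ℝ) y * g y ∂ρ0) = ⟪Q I, G⟫ := (inner_toLp_eq (Q I) hg).symm
  rw [hlim1]
  -- decomposition
  set P : H := (Submodule.orthogonalProjectionOnto M G : H) with hP
  have hdecomp : ∀ t : ℝ, 0 ≤ t → (∫ y, X t y * g y ∂ρ0) = ⟪Y t, P⟫ + ⟪Q I, G⟫ := by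
    intro t ht
    have e0 : (∫ y, X t y * g y ∂ρ0) = ⟪Y t, G⟫ := by
      rw [hG, inner_toLp_eq (Y t) hg]
      refine integral_congr_ae ?_
      have := hYdef t ht
      filter_upwards [(hXL2 t ht).coeFn_toLp] with y hy
      rw [this, hy]
    have e1 : G = P + Q G :=
      (Submodule.starProjection_add_starProjection_orthogonal (K := M) G).symm
    have e2 : ⟪Y t, Q G⟫ = ⟪Q (Y t), G⟫ :=
      (Submodule.inner_starProjection_left_eq_right Mᗮ (Y t) G).symm
    rw [e0]
    conv_lhs => rw [e1]
    rw [inner_add_right, e2, hQYconst t ht]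
  -- the P-part tends to zero
  have hPmem : P ∈ M := by
    exact Submodule.coe_mem _
  have hspan : ∀ m ∈ S, ∃ t0 : ℝ, ∀ t : ℝ, t0 ≤ t → ⟪Y t, m⟫ = 0 := by
    intro m hm
    induction hm using Submodule.span_induction with
    | mem x hx =>
        obtain ⟨s, rfl⟩ := hx
        refine ⟨max s.1 0, fun t htt => ?_⟩
        exact horth s.1 t s.2 (le_trans (le_max_left _ _) htt)
    | zero => exact ⟨0, fun t _ => inner_zero_right _⟩
    | add x y hx hy ihx ihy =>
        obtain ⟨t1, h1⟩ := ihx; obtain ⟨t2, h2⟩ := ihy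
        refine ⟨max t1 t2, fun t htt => ?_⟩
        rw [inner_add_right, h1 t (le_trans (le_max_left _ _) htt),
          h2 t (le_trans (le_max_right _ _) htt), add_zero]
    | smul c x hx ihx =>
        obtain ⟨t1, h1⟩ := ihx
        exact ⟨t1, fun t htt => by rw [real_inner_smul_right, h1 t htt, mul_zero]⟩
  have hPtend : Filter.Tendsto (fun t : ℝ => ⟪Y t, P⟫) Filter.atTop (nhds 0) := by
    rw [Metric.tendsto_atTop]
    intro ε hε
    have hden : (0:ℝ) < B + 1 := by linarith
    have : P ∈ closure (S : Set H) := hPmem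
    rw [Metric.mem_closure_iff] at this
    obtain ⟨m, hmS, hmd⟩ := this (ε / (B + 1)) (by positivity)
    obtain ⟨t0, ht0⟩ := hspan m hmS
    refine ⟨max t0 0, fun t htt => ?_⟩
    have ht : (0:ℝ) ≤ t := le_trans (le_max_right _ _) htt
    have ht0' := ht0 t (le_trans (le_max_left _ _) htt)
    rw [Real.dist_eq, sub_zero]
    have : ⟪Y t, P⟫ = ⟪Y t, P - m⟫ := by rw [inner_sub_right, ht0', sub_zero]
    rw [this]
    calc |⟪Y t, P - m⟫| ≤ ‖Y t‖ * ‖P - m‖ := abs_real_inner_le_norm _ _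
      _ ≤ B * (ε / (B + 1)) := by
          refine mul_le_mul (hYnorm t ht) ?_ (norm_nonneg _) hBnn
          rw [← dist_eq_norm]; exact hmd.le
      _ < ε := by
          rw [div_eq_inv_mul, ← mul_assoc]
          calc B * (B+1)⁻¹ * ε < 1 * ε := by
                refine mul_lt_mul_of_pos_right ?_ hε
                rw [mul_inv_lt_iff₀' hden]; linarith
            _ = ε := one_mul ε
  have := (hPtend.add tendsto_const_nhds (b := ⟪Q I, G⟫))
  rw [zero_add] at this
  refine this.congr' ?_
  filter_upwards [Filter.eventually_ge_atTop (0:ℝ)] with t ht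
  exact (hdecomp t ht).symm
end
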